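/- Let A ∈ ℝ^{m×N} satisfy the weighted block RIP of order 2s with constant δ_{2s}, with respect to a block structure B and weights ω_i ≥ 1, where s ≥ 2‖ω‖_∞². If δ_{2s} < 1/(2√2 + 1), then A satisfies the ℓ_ω^2-BRNSP of order s with constants ρ = 2√2 δ_{2s}/(1 − δ_{2s}) ∈ (0,1) and τ = √(1+δ_{2s})/(1 − δ_{2s}). -/

import Mathlib

open Finset

noncomputable def l2 {n : Type*} [Fintype n] (v : n → ℝ) : ℝ := Real.sqrt (∑ i, (v i) ^ 2)

variable {B : ℕ} {d : Fin B → ℕ}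

/-- ℓ² norm of the block `b` of the block vector `x`. -/
noncomputable def bn (x : ((b : Fin B) × Fin (d b)) → ℝ) (b : Fin B) : ℝ :=
  Real.sqrt (∑ i : Fin (d b), (x ⟨b, i⟩) ^ 2)

/-- Weighted block ℓ¹ norm `‖x‖_{2,1}^{(ω)}`. -/
noncomputable def n21 (ω : Fin B → ℝ) (x : ((b : Fin B) × Fin (d b)) → ℝ) : ℝ :=
  ∑ b, ω b * bn x b

/-- Weighted block (2,p) norm `‖x‖_{2,p}^{(ω)}` (real exponents). -/
noncomputable def n2p (ω : Fin B → ℝ) (p : ℝ) (x : ((b : Fin B) × Fin (d b)) → ℝ) : ℝ :=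
  (∑ b, ω b ^ (2 - p) * bn x b ^ p) ^ (1 / p)

/-- Restriction of `x` to the blocks in `S` (zero outside). -/
def rs (S : Finset (Fin B)) (x : ((b : Fin B) × Fin (d b)) → ℝ) :
    ((b : Fin B) × Fin (d b)) → ℝ :=
  fun j => if j.1 ∈ S then x j else 0

/-- Weighted cardinality `ω(S) = ∑_{b∈S} ω_b²`. -/
def wCard (ω : Fin B → ℝ) (S : Finset (Fin B)) : ℝ := ∑ b ∈ S, ω b ^ 2

/-- Weighted block sparsity `‖x‖₀^{(ω)}`. -/
noncomputable def wspar (ω : Fin B → ℝ) (x : ((b : Fin B) × Fin (d b)) → ℝ) : ℝ :=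
  ∑ b, if bn x b = 0 then 0 else ω b ^ 2

/-- Best weighted `s`-block approximation error in the `‖·‖_{2,1}^{(ω)}` norm. -/
noncomputable def sigmaS (ω : Fin B → ℝ) (s : ℝ) (x : ((b : Fin B) × Fin (d b)) → ℝ) : ℝ :=
  sInf {t | ∃ z, wspar ω z ≤ s ∧ t = n21 ω (x - z)}

/-- Weighted block restricted isometry property of order `t` with constant `δ`. -/
noncomputable def WBRIP {m : ℕ} (A : Matrix (Fin m) ((b : Fin B) × Fin (d b)) ℝ)
    (ω : Fin B → ℝ) (t δ : ℝ) : Prop :=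
  ∀ x : ((b : Fin B) × Fin (d b)) → ℝ, wspar ω x ≤ t →
    (1 - δ) * l2 x ^ 2 ≤ l2 (A.mulVec x) ^ 2 ∧ l2 (A.mulVec x) ^ 2 ≤ (1 + δ) * l2 x ^ 2

/-! Sort the blocks outside `S` by decreasing ratio `‖v[b]‖₂ / ω_b` and cut them greedily into
consecutive groups `P, C₁, C₂, …` of weight at most `s`, every group but the last of weight at
least `s / 2`. Each ratio in a group is then at most `2 / s` times the weighted `ℓ₁` norm of `v` on
the previous group, so `∑ₖ ‖v[Cₖ]‖₂ ≤ (2 / √s) ‖v[Sᶜ]‖_{2,1}^{(ω)}`.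

With `T = S ∪ P`, the RIP gives
`(1 - δ) ‖v[T]‖₂² ≤ ‖A v[T]‖₂² = ⟨A v[T], A v⟩ - ∑ₖ ⟨A v[T], A v[Cₖ]⟩`.
The first term is at most `√(1 + δ) ‖v[T]‖₂ ‖A v‖₂`, and by polarization each cross term is at
most `δ (‖v[S]‖₂ + ‖v[P]‖₂) ‖v[Cₖ]‖₂ ≤ √2 δ ‖v[T]‖₂ ‖v[Cₖ]‖₂`. -/

section Chunks

variable {ι : Type*}

theorem Real.sqrt_sum_sq_le_of_le_mul {a ω : ι → ℝ} {C : Finset ι} {m s : ℝ}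
    (ha : ∀ b ∈ C, 0 ≤ a b) (hm : 0 ≤ m) (haω : ∀ b ∈ C, a b ≤ m * ω b)
    (hC : ∑ b ∈ C, ω b ^ 2 ≤ s) :
    √(∑ b ∈ C, a b ^ 2) ≤ √s * m := by
  have hsum : ∑ b ∈ C, a b ^ 2 ≤ s * m ^ 2 :=
    calc ∑ b ∈ C, a b ^ 2 ≤ ∑ b ∈ C, (m * ω b) ^ 2 :=
          sum_le_sum fun b hb => pow_le_pow_left₀ (ha b hb) (haω b hb) 2
      _ = m ^ 2 * ∑ b ∈ C, ω b ^ 2 := by rw [mul_sum]; simp only [mul_pow]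
      _ ≤ s * m ^ 2 := by nlinarith [sq_nonneg m]
  calc √(∑ b ∈ C, a b ^ 2) ≤ √(s * m ^ 2) := Real.sqrt_le_sqrt hsum
    _ = √s * m := by rw [Real.sqrt_mul' s (sq_nonneg m), Real.sqrt_sq hm]

theorem le_mul_of_div_le_of_half_le_sum {a ω : ι → ℝ} {P : Finset ι} {c : ι} {s : ℝ}
    (ha : ∀ b, 0 ≤ a b) (hω : ∀ b, 0 < ω b) (hs : 0 < s)
    (hP : s / 2 ≤ ∑ p ∈ P, ω p ^ 2) (hc : ∀ p ∈ P, a c / ω c ≤ a p / ω p) :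
    a c ≤ 2 / s * (∑ p ∈ P, ω p * a p) * ω c := by
  have hmean : (∑ p ∈ P, ω p ^ 2) * (a c / ω c) ≤ ∑ p ∈ P, ω p * a p := by
    rw [sum_mul]
    refine sum_le_sum fun p hp => ?_
    calc ω p ^ 2 * (a c / ω c) ≤ ω p ^ 2 * (a p / ω p) :=
          mul_le_mul_of_nonneg_left (hc p hp) (sq_nonneg _)
      _ = ω p * a p := by field_simp [(hω p).ne']
  have hratio : s / 2 * (a c / ω c) ≤ ∑ p ∈ P, ω p * a p :=
    (mul_le_mul_of_nonneg_right hP (div_nonneg (ha c) (hω c).le)).trans hmean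
  calc a c = a c / ω c * ω c := (div_mul_cancel₀ _ (hω c).ne').symm
    _ ≤ 2 / s * (∑ p ∈ P, ω p * a p) * ω c := by
      refine mul_le_mul_of_nonneg_right ?_ (hω c).le
      rw [div_mul_eq_mul_div, le_div_iff₀ hs]
      linarith

variable [DecidableEq ι]

theorem Finset.exists_greedy_prefix (r w : ι → ℝ) {M : ℝ} (hwM : ∀ b, w b ≤ M)
    (R : Finset ι) (h : ℝ) (hh : 0 ≤ h) (hR : R.Nonempty) :
    ∃ P ⊆ R, P.Nonempty ∧ (∀ p ∈ P, ∀ c ∈ R \ P, r c ≤ r p) ∧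
      ∑ b ∈ P, w b ≤ h + M ∧ (P = R ∨ h ≤ ∑ b ∈ P, w b) := by
  induction R using Finset.strongInduction generalizing h with
  | H R ih =>
  obtain ⟨b, hbR, hbmax⟩ := R.exists_max_image r hR
  by_cases hb : h ≤ w b
  · refine ⟨{b}, singleton_subset_iff.2 hbR, singleton_nonempty b, ?_, ?_, Or.inr ?_⟩
    · simp only [mem_singleton, mem_sdiff]
      rintro p rfl c ⟨hc, -⟩
      exact hbmax c hc
    · linarith [hwM b, sum_singleton w b]
    · rwa [sum_singleton]
  replace hb := not_le.1 hb
  rcases (R.erase b).eq_empty_or_nonempty with hE | hE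
  · refine ⟨R, subset_rfl, hR, by simp, ?_, Or.inl rfl⟩
    rw [← sum_erase_add R w hbR, hE, sum_empty]
    linarith [hwM b]
  obtain ⟨P, hPR, -, hord, hsum, hfull⟩ :=
    ih _ (erase_ssubset hbR) (h - w b) (by linarith) hE
  have hbP : b ∉ P := fun hb => by simpa using hPR hb
  refine ⟨insert b P, insert_subset hbR (hPR.trans (erase_subset b R)),
    insert_nonempty b P, ?_, ?_, ?_⟩
  · intro p hp c hc
    have hc' : c ∈ R.erase b \ P := by
      simp only [mem_sdiff, mem_insert, not_or, mem_erase] at hc ⊢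
      exact ⟨⟨hc.2.1, hc.1⟩, hc.2.2⟩
    rcases mem_insert.1 hp with rfl | hp
    · exact hbmax c (mem_sdiff.1 hc).1
    · exact hord p hp c hc'
  · rw [sum_insert hbP]
    linarith
  · rcases hfull with rfl | hfull
    · exact Or.inl (insert_erase hbR)
    · rw [sum_insert hbP]
      exact Or.inr (by linarith)

theorem exists_prefix_and_chunks (a ω : ι → ℝ) (ha : ∀ b, 0 ≤ a b) (hω : ∀ b, 0 < ω b)
    {s : ℝ} (hs0 : 0 ≤ s) (hs : ∀ b, 2 * ω b ^ 2 ≤ s) (R : Finset ι) :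
    ∃ P ⊆ R, ∑ b ∈ P, ω b ^ 2 ≤ s ∧ ∃ Cs : Finset (Finset ι),
      (Cs : Set (Finset ι)).PairwiseDisjoint id ∧ Cs.biUnion id = R \ P ∧
      (∀ C ∈ Cs, ∑ b ∈ C, ω b ^ 2 ≤ s) ∧
      ∑ C ∈ Cs, √(∑ b ∈ C, a b ^ 2) ≤ 2 / √s * ∑ b ∈ R, ω b * a b := by
  induction R using Finset.strongInduction with
  | H R ih =>
  rcases R.eq_empty_or_nonempty with rfl | ⟨b₀, hb₀⟩
  · exact ⟨∅, empty_subset _, by simpa using hs0, ∅, by simp, by simp, by simp, by simp⟩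
  have hs_pos : 0 < s := by nlinarith [hs b₀, pow_pos (hω b₀) 2]
  obtain ⟨P, hPR, hPne, hord, hPs, hfull⟩ :=
    exists_greedy_prefix (fun b => a b / ω b) (fun b => ω b ^ 2) (M := s / 2)
      (fun b => by linarith [hs b]) R (s / 2) (by positivity) ⟨b₀, hb₀⟩
  obtain ⟨P', hP'R, hP's, Cs, hCs, hcover, hCs_s, hsum⟩ := ih (R \ P) (sdiff_ssubset hPR hPne)
  set NP := ∑ p ∈ P, ω p * a p
  have hNP : 0 ≤ NP := sum_nonneg fun p _ => mul_nonneg (hω p).le (ha p)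
  have hrest : ∀ c ∈ R \ P, a c ≤ 2 / s * NP * ω c := by
    intro c hc
    rcases hfull with rfl | hfull
    · simp at hc
    · exact le_mul_of_div_le_of_half_le_sum ha hω hs_pos hfull fun p hp => hord p hp c hc
  have hP'norm : √(∑ b ∈ P', a b ^ 2) ≤ 2 / √s * NP :=
    calc √(∑ b ∈ P', a b ^ 2) ≤ √s * (2 / s * NP) :=
          Real.sqrt_sum_sq_le_of_le_mul (fun b _ => ha b) (by positivity)
            (fun b hb => hrest b (hP'R hb)) hP's
      _ = 2 / √s * NP := by
          field_simp
          rw [Real.sq_sqrt hs0]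
  have hCsub : ∀ C ∈ Cs, C ⊆ (R \ P) \ P' := fun C hC => hcover ▸ subset_biUnion_of_mem id hC
  have hsum_insert : ∑ C ∈ insert P' Cs, √(∑ b ∈ C, a b ^ 2)
      ≤ √(∑ b ∈ P', a b ^ 2) + ∑ C ∈ Cs, √(∑ b ∈ C, a b ^ 2) := by
    by_cases hP' : P' ∈ Cs
    · rw [insert_eq_of_mem hP']
      linarith [Real.sqrt_nonneg (∑ b ∈ P', a b ^ 2)]
    · rw [sum_insert hP']
  refine ⟨P, hPR, by linarith, insert P' Cs, ?_, ?_, ?_, ?_⟩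
  · rw [coe_insert]
    exact hCs.insert fun C hC _ => disjoint_of_subset_right (hCsub C hC) disjoint_sdiff
  · rw [biUnion_insert, hcover]
    exact union_sdiff_of_subset hP'R
  · exact forall_mem_insert _ _ _ |>.2 ⟨hP's, hCs_s⟩
  · calc ∑ C ∈ insert P' Cs, √(∑ b ∈ C, a b ^ 2)
        ≤ 2 / √s * NP + 2 / √s * ∑ b ∈ R \ P, ω b * a b :=
          hsum_insert.trans (add_le_add hP'norm hsum)
      _ = 2 / √s * ∑ b ∈ R, ω b * a b := by rw [← mul_add, add_comm, sum_sdiff hPR]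

end Chunks

open Matrix

section Euclidean

variable {n : Type*} [Fintype n]

theorem sq_l2 (x : n → ℝ) : l2 x ^ 2 = x ⬝ᵥ x := by
  rw [l2, Real.sq_sqrt (by positivity)]
  simp only [dotProduct, sq]

theorem l2_nonneg (x : n → ℝ) : 0 ≤ l2 x := Real.sqrt_nonneg _

theorem l2_smul (c : ℝ) (x : n → ℝ) : l2 (c • x) = |c| * l2 x := by
  rw [l2, l2, ← Real.sqrt_sq_eq_abs, ← Real.sqrt_mul (sq_nonneg c), mul_sum]
  simp only [Pi.smul_apply, smul_eq_mul, mul_pow]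

theorem eq_zero_of_l2_eq_zero {x : n → ℝ} (hx : l2 x = 0) : x = 0 :=
  dotProduct_self_eq_zero.1 (by rw [← sq_l2, hx, sq, zero_mul])

theorem abs_dotProduct_le_l2_mul_l2 (x y : n → ℝ) : |x ⬝ᵥ y| ≤ l2 x * l2 y := by
  rw [l2, l2, ← Real.sqrt_mul (by positivity)]
  exact Real.abs_le_sqrt (sum_mul_sq_le_sq_mul_sq univ x y)

end Euclidean

section Blocks

theorem bn_nonneg (x : ((b : Fin B) × Fin (d b)) → ℝ) (b : Fin B) : 0 ≤ bn x b :=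
  Real.sqrt_nonneg _

theorem bn_rs (S : Finset (Fin B)) (x : ((b : Fin B) × Fin (d b)) → ℝ) (b : Fin B) :
    bn (rs S x) b = if b ∈ S then bn x b else 0 := by
  by_cases hb : b ∈ S <;> simp [bn, rs, hb]

theorem l2_eq_sqrt_sum_bn_sq (x : ((b : Fin B) × Fin (d b)) → ℝ) :
    l2 x = √(∑ b, bn x b ^ 2) := by
  rw [l2, Fintype.sum_sigma]
  congr 1
  refine sum_congr rfl fun b _ => ?_
  rw [bn, Real.sq_sqrt (by positivity)]

theorem l2_rs (S : Finset (Fin B)) (x : ((b : Fin B) × Fin (d b)) → ℝ) :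
    l2 (rs S x) = √(∑ b ∈ S, bn x b ^ 2) := by
  simp only [l2_eq_sqrt_sum_bn_sq, bn_rs, ite_pow, zero_pow two_ne_zero, sum_ite_mem, univ_inter]

theorem l2_rs_le_of_subset {S T : Finset (Fin B)} (hST : S ⊆ T)
    (x : ((b : Fin B) × Fin (d b)) → ℝ) : l2 (rs S x) ≤ l2 (rs T x) := by
  rw [l2_rs, l2_rs]
  exact Real.sqrt_le_sqrt (sum_le_sum_of_subset_of_nonneg hST fun b _ _ => sq_nonneg _)

theorem l2_rs_add_l2_rs_le {S T : Finset (Fin B)} (hST : Disjoint S T)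
    (x : ((b : Fin B) × Fin (d b)) → ℝ) :
    l2 (rs S x) + l2 (rs T x) ≤ √2 * l2 (rs (S ∪ T) x) := by
  rw [l2_rs, l2_rs, l2_rs, sum_union hST, ← Real.sqrt_mul zero_le_two]
  set X := ∑ b ∈ S, bn x b ^ 2
  set Y := ∑ b ∈ T, bn x b ^ 2
  have hX : 0 ≤ X := sum_nonneg fun b _ => sq_nonneg _
  have hY : 0 ≤ Y := sum_nonneg fun b _ => sq_nonneg _
  rw [Real.le_sqrt (by positivity) (by positivity)]
  nlinarith [Real.sq_sqrt hX, Real.sq_sqrt hY, sq_nonneg (√X - √Y)]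

theorem rs_union {S T : Finset (Fin B)} (hST : Disjoint S T)
    (x : ((b : Fin B) × Fin (d b)) → ℝ) : rs (S ∪ T) x = rs S x + rs T x := by
  funext j
  by_cases hS : j.1 ∈ S
  · simp [rs, hS, disjoint_left.1 hST hS]
  · simp [rs, hS]

theorem rs_add_rs_compl (S : Finset (Fin B)) (x : ((b : Fin B) × Fin (d b)) → ℝ) :
    rs S x + rs Sᶜ x = x := by
  funext j
  by_cases hS : j.1 ∈ S <;> simp [rs, hS]

theorem rs_biUnion {Cs : Finset (Finset (Fin B))}
    (hCs : (Cs : Set (Finset (Fin B))).PairwiseDisjoint id)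
    (x : ((b : Fin B) × Fin (d b)) → ℝ) : rs (Cs.biUnion id) x = ∑ C ∈ Cs, rs C x := by
  funext j
  have hrs : ∀ C : Finset (Fin B), rs C x j = ∑ b ∈ C, if j.1 = b then x j else 0 := fun C => by
    rw [sum_ite_eq]; rfl
  rw [Finset.sum_apply, hrs, sum_biUnion hCs]
  simp only [id, hrs]

theorem rs_smul (S : Finset (Fin B)) (c : ℝ) (x : ((b : Fin B) × Fin (d b)) → ℝ) :
    rs S (c • x) = c • rs S x := by
  funext j
  by_cases hS : j.1 ∈ S <;> simp [rs, hS]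

theorem rs_dotProduct_rs {S T : Finset (Fin B)} (hST : Disjoint S T)
    (x y : ((b : Fin B) × Fin (d b)) → ℝ) : rs S x ⬝ᵥ rs T y = 0 := by
  refine sum_eq_zero fun j _ => ?_
  by_cases hS : j.1 ∈ S
  · simp [rs, hS, disjoint_left.1 hST hS]
  · simp [rs, hS]

theorem wCard_union (ω : Fin B → ℝ) {S T : Finset (Fin B)} (hST : Disjoint S T) :
    wCard ω (S ∪ T) = wCard ω S + wCard ω T :=
  sum_union hST

theorem wspar_le_wCard (ω : Fin B → ℝ) {E : Finset (Fin B)} {x : ((b : Fin B) × Fin (d b)) → ℝ}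
    (hx : ∀ j, j.1 ∉ E → x j = 0) : wspar ω x ≤ wCard ω E := by
  calc wspar ω x ≤ ∑ b, if b ∈ E then ω b ^ 2 else 0 := by
        refine sum_le_sum fun b _ => ?_
        by_cases hb : b ∈ E
        · rw [if_pos hb]
          split_ifs
          exacts [sq_nonneg _, le_rfl]
        · have hxb : bn x b = 0 := by simp [bn, fun i => hx ⟨b, i⟩ hb]
          simp [hxb, hb]
    _ = wCard ω E := by rw [sum_ite_mem, univ_inter, wCard]

theorem n21_rs (ω : Fin B → ℝ) (S : Finset (Fin B)) (x : ((b : Fin B) × Fin (d b)) → ℝ) :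
    n21 ω (rs S x) = ∑ b ∈ S, ω b * bn x b := by
  simp only [n21, bn_rs, mul_ite, mul_zero, sum_ite_mem, univ_inter]

end Blocks

namespace WBRIP

variable {m : ℕ} {A : Matrix (Fin m) ((b : Fin B) × Fin (d b)) ℝ} {ω : Fin B → ℝ} {t δ : ℝ}

theorem l2_mulVec_le (hRIP : WBRIP A ω t δ) {x : ((b : Fin B) × Fin (d b)) → ℝ}
    (hx : wspar ω x ≤ t) : l2 (A *ᵥ x) ≤ √(1 + δ) * l2 x :=
  calc l2 (A *ᵥ x) = √(l2 (A *ᵥ x) ^ 2) := (Real.sqrt_sq (l2_nonneg _)).symm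
    _ ≤ √((1 + δ) * l2 x ^ 2) := Real.sqrt_le_sqrt (hRIP x hx).2
    _ = √(1 + δ) * l2 x := by rw [Real.sqrt_mul' _ (sq_nonneg _), Real.sqrt_sq (l2_nonneg _)]

theorem abs_dotProduct_le_half (hRIP : WBRIP A ω t δ) {S T : Finset (Fin B)}
    (hST : Disjoint S T) (ht : wCard ω S + wCard ω T ≤ t) (x y : ((b : Fin B) × Fin (d b)) → ℝ) :
    |(A *ᵥ rs S x) ⬝ᵥ (A *ᵥ rs T y)| ≤ δ / 2 * (l2 (rs S x) ^ 2 + l2 (rs T y) ^ 2) := by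
  have hE : wCard ω (S ∪ T) ≤ t := by rwa [wCard_union ω hST]
  have hsupp : ∀ j : (b : Fin B) × Fin (d b), j.1 ∉ S ∪ T → rs S x j = 0 ∧ rs T y j = 0 := by
    intro j hj
    simp only [mem_union, not_or] at hj
    simp [rs, hj.1, hj.2]
  have hadd := hRIP (rs S x + rs T y) <| (wspar_le_wCard ω fun j hj => by
    simp [hsupp j hj]).trans hE
  have hsub := hRIP (rs S x - rs T y) <| (wspar_le_wCard ω fun j hj => by
    simp [hsupp j hj]).trans hE
  have horth := rs_dotProduct_rs hST x y
  simp only [sq_l2, mulVec_add, mulVec_sub, add_dotProduct, dotProduct_add, sub_dotProduct,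
    dotProduct_sub, horth, dotProduct_comm (rs T y) (rs S x),
    dotProduct_comm (A *ᵥ rs T y) (A *ᵥ rs S x)] at hadd hsub ⊢
  rw [abs_le]
  constructor <;> linarith [hadd.1, hadd.2, hsub.1, hsub.2]

theorem abs_dotProduct_le (hRIP : WBRIP A ω t δ) {S T : Finset (Fin B)}
    (hST : Disjoint S T) (ht : wCard ω S + wCard ω T ≤ t) (x y : ((b : Fin B) × Fin (d b)) → ℝ) :
    |(A *ᵥ rs S x) ⬝ᵥ (A *ᵥ rs T y)| ≤ δ * l2 (rs S x) * l2 (rs T y) := by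
  rcases (l2_nonneg (rs S x)).eq_or_lt with hα | hα
  · rw [← hα]
    simp [eq_zero_of_l2_eq_zero hα.symm]
  rcases (l2_nonneg (rs T y)).eq_or_lt with hβ | hβ
  · rw [← hβ]
    simp [eq_zero_of_l2_eq_zero hβ.symm]
  have hunit := hRIP.abs_dotProduct_le_half hST ht ((l2 (rs S x))⁻¹ • x) ((l2 (rs T y))⁻¹ • y)
  simp only [rs_smul, l2_smul, mulVec_smul, smul_dotProduct, dotProduct_smul, smul_eq_mul,
    abs_mul, abs_inv, abs_of_pos hα, abs_of_pos hβ, inv_mul_cancel₀ hα.ne',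
    inv_mul_cancel₀ hβ.ne'] at hunit
  set P := (A *ᵥ rs S x) ⬝ᵥ (A *ᵥ rs T y)
  calc |P| = l2 (rs S x) * l2 (rs T y) * ((l2 (rs T y))⁻¹ * ((l2 (rs S x))⁻¹ * |P|)) := by
        field_simp
    _ ≤ l2 (rs S x) * l2 (rs T y) * δ := mul_le_mul_of_nonneg_left (by linarith) (by positivity)
    _ = δ * l2 (rs S x) * l2 (rs T y) := by ring

theorem l2_rs_union_le {s : ℝ} (hRIP : WBRIP A ω (2 * s) δ) (hδ : 0 ≤ δ) {S P : Finset (Fin B)}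
    (hSP : Disjoint S P) (hS : wCard ω S ≤ s) (hP : wCard ω P ≤ s)
    {Cs : Finset (Finset (Fin B))} (hCs : (Cs : Set (Finset (Fin B))).PairwiseDisjoint id)
    (hcover : Cs.biUnion id = (S ∪ P)ᶜ) (hCs_s : ∀ C ∈ Cs, wCard ω C ≤ s)
    (v : ((b : Fin B) × Fin (d b)) → ℝ) :
    (1 - δ) * l2 (rs (S ∪ P) v) ≤ √(1 + δ) * l2 (A *ᵥ v) + √2 * δ * ∑ C ∈ Cs, l2 (rs C v) := by
  set u := rs (S ∪ P) v
  have hu : wspar ω u ≤ 2 * s :=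
    (wspar_le_wCard ω (E := S ∪ P) fun j hj => if_neg hj).trans <| by
      rw [wCard_union ω hSP]; linarith
  have hAv : A *ᵥ v = A *ᵥ u + ∑ C ∈ Cs, A *ᵥ rs C v := by
    rw [← mulVec_sum, ← rs_biUnion hCs, hcover, ← mulVec_add, rs_add_rs_compl]
  have hcross : ∀ C ∈ Cs, -((A *ᵥ u) ⬝ᵥ (A *ᵥ rs C v)) ≤ √2 * δ * l2 u * l2 (rs C v) := by
    intro C hC
    have hCc : C ⊆ (S ∪ P)ᶜ := hcover ▸ subset_biUnion_of_mem id hC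
    obtain ⟨hSC, hPC⟩ := disjoint_union_left.1 (subset_compl_iff_disjoint_left.1 hCc)
    have hSC' := hRIP.abs_dotProduct_le hSC (by linarith [hCs_s C hC]) v v
    have hPC' := hRIP.abs_dotProduct_le hPC (by linarith [hCs_s C hC]) v v
    calc -((A *ᵥ u) ⬝ᵥ (A *ᵥ rs C v)) ≤ |(A *ᵥ u) ⬝ᵥ (A *ᵥ rs C v)| := neg_le_abs _
      _ ≤ |(A *ᵥ rs S v) ⬝ᵥ (A *ᵥ rs C v)| + |(A *ᵥ rs P v) ⬝ᵥ (A *ᵥ rs C v)| := by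
          rw [show u = rs S v + rs P v from rs_union hSP v, mulVec_add, add_dotProduct]
          exact abs_add_le _ _
      _ ≤ δ * (l2 (rs S v) + l2 (rs P v)) * l2 (rs C v) := by linarith
      _ ≤ δ * (√2 * l2 u) * l2 (rs C v) := mul_le_mul_of_nonneg_right
          (mul_le_mul_of_nonneg_left (l2_rs_add_l2_rs_le hSP v) hδ) (l2_nonneg _)
      _ = √2 * δ * l2 u * l2 (rs C v) := by ring
  have hlow := (hRIP u hu).1
  have henergy : l2 (A *ᵥ u) ^ 2
      = (A *ᵥ u) ⬝ᵥ (A *ᵥ v) - ∑ C ∈ Cs, (A *ᵥ u) ⬝ᵥ (A *ᵥ rs C v) := by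
    rw [sq_l2, hAv, dotProduct_add, dotProduct_sum]
    ring
  have hhead : (A *ᵥ u) ⬝ᵥ (A *ᵥ v) ≤ √(1 + δ) * l2 u * l2 (A *ᵥ v) :=
    (le_abs_self _).trans <| (abs_dotProduct_le_l2_mul_l2 _ _).trans <|
      mul_le_mul_of_nonneg_right (hRIP.l2_mulVec_le hu) (l2_nonneg _)
  have htail : -∑ C ∈ Cs, (A *ᵥ u) ⬝ᵥ (A *ᵥ rs C v) ≤ √2 * δ * l2 u * ∑ C ∈ Cs, l2 (rs C v) := by
    rw [← sum_neg_distrib, mul_sum]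
    exact sum_le_sum hcross
  rcases (l2_nonneg u).eq_or_lt with h0 | hpos
  · rw [← h0, mul_zero]
    exact add_nonneg (mul_nonneg (Real.sqrt_nonneg _) (l2_nonneg _)) <|
      mul_nonneg (mul_nonneg (Real.sqrt_nonneg _) hδ) (sum_nonneg fun C _ => l2_nonneg _)
  · refine le_of_mul_le_mul_right ?_ hpos
    linarith

end WBRIP

theorem stmt6 {m : ℕ} (A : Matrix (Fin m) ((b : Fin B) × Fin (d b)) ℝ)
    (ω : Fin B → ℝ) (hω : ∀ b, 1 ≤ ω b) (s δ : ℝ)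
    (hδ0 : 0 < δ) (hδ : δ < 1 / (2 * Real.sqrt 2 + 1))
    (hs : ∀ b, 2 * ω b ^ 2 ≤ s)
    (hRIP : WBRIP A ω (2 * s) δ) :
    (0 < 2 * Real.sqrt 2 * δ / (1 - δ) ∧ 2 * Real.sqrt 2 * δ / (1 - δ) < 1) ∧
    ∀ (v : ((b : Fin B) × Fin (d b)) → ℝ) (S : Finset (Fin B)), wCard ω S ≤ s →
      l2 (rs S v) ≤ (2 * Real.sqrt 2 * δ / (1 - δ)) / Real.sqrt s * n21 ω (rs Sᶜ v)
        + Real.sqrt (1 + δ) / (1 - δ) * l2 (A.mulVec v) := by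
  have hδ' : δ * (2 * √2 + 1) < 1 := (lt_div_iff₀ (by positivity)).1 hδ
  have hδ1 : 0 < 1 - δ := by nlinarith [Real.sqrt_nonneg 2]
  refine ⟨⟨by positivity, (div_lt_one hδ1).2 (by linarith)⟩, fun v S hS => ?_⟩
  have hs0 : 0 ≤ s := (sum_nonneg fun b _ => sq_nonneg (ω b)).trans hS
  obtain ⟨P, hPS, hPs, Cs, hCs, hcover, hCs_s, hCs_sum⟩ := exists_prefix_and_chunks (bn v) ω
    (bn_nonneg v) (fun b => one_pos.trans_le (hω b)) hs0 hs Sᶜ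
  have hSP : Disjoint S P := subset_compl_iff_disjoint_left.1 hPS
  have hcover' : Cs.biUnion id = (S ∪ P)ᶜ := by rw [hcover, compl_union, sdiff_eq_inter_compl]
  have hT := hRIP.l2_rs_union_le hδ0.le hSP hS hPs hCs hcover' hCs_s v
  have htail : ∑ C ∈ Cs, l2 (rs C v) ≤ 2 / √s * n21 ω (rs Sᶜ v) := by
    simpa only [l2_rs, n21_rs] using hCs_sum
  calc l2 (rs S v) ≤ l2 (rs (S ∪ P) v) := l2_rs_le_of_subset subset_union_left v
    _ ≤ (√(1 + δ) * l2 (A *ᵥ v) + √2 * δ * (2 / √s * n21 ω (rs Sᶜ v))) / (1 - δ) := by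
        rw [le_div_iff₀ hδ1]
        linarith [mul_le_mul_of_nonneg_left htail (by positivity : 0 ≤ √2 * δ)]
    _ = _ := by ring
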